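/- arXiv:2412.14057 — 6 statements merged into one kernel-verified Lean document; each statement's English description precedes it below -/
import Mathlib

section
/- Let Σ be a signature, M = ⟨V, D, ·_M⟩ a finite-valued deterministic Σ-matrix, and n ∈ ℕ with n ≥ |V|. Then the logic ⟨Σ, ⊢_M⟩ is n-determined: for all Γ ∪ {A} ⊆ L_Σ(P), if Γ ⊬_M A then there exists a substitution σ : P → P_n such that Γ^σ ⊬_M A^σ. -/
structure Signature where
  Conn : Type
  arity : Conn → ℕ

inductive Fm (S : Signature) : Type where
  | var : ℕ → Fm S
  | app : (c : S.Conn) → (Fin (S.arity c) → Fm S) → Fm S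

def Fm.subst {S : Signature} (σ : ℕ → Fm S) : Fm S → Fm S
  | .var i => σ i
  | .app c args => .app c (fun j => (args j).subst σ)

def Fm.varsLT {S : Signature} (n : ℕ) : Fm S → Prop
  | .var i => i < n
  | .app _ args => ∀ j, (args j).varsLT n

structure NMatrix (S : Signature) (V : Type) where
  D : Set V
  interp : (c : S.Conn) → (Fin (S.arity c) → V) → Set V
  interp_nonempty : ∀ c args, (interp c args).Nonempty

def IsVal {S : Signature} {V : Type} (M : NMatrix S V) (v : Fm S → V) : Prop :=
  ∀ (c : S.Conn) (args : Fin (S.arity c) → Fm S),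
    v (Fm.app c args) ∈ M.interp c (fun i => v (args i))

def Entails {S : Signature} {V : Type} (M : NMatrix S V) (Γ : Set (Fm S)) (A : Fm S) : Prop :=
  ∀ v, IsVal M v → (∀ B ∈ Γ, v B ∈ M.D) → v A ∈ M.D

def Interderiv {S : Signature} {V : Type} (M : NMatrix S V) (A B : Fm S) : Prop :=
  Entails M {A} B ∧ Entails M {B} A

def Deterministic {S : Signature} {V : Type} (M : NMatrix S V) : Prop :=
  ∀ c args, ∃ x, M.interp c args = {x}

/-!
Take a countermodel `v` and code the truth-values injectively by numbers below `n`; rename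
`p_i` to the variable whose index is the code of `v p_i`. Decoding the variables gives a
valuation `w`, and in a deterministic matrix `w` after the renaming is a valuation that agrees
with `v` on the variables, hence equals `v`, so it is still a countermodel.
-/

noncomputable def NMatrix.choiceVal {S : Signature} {V : Type} (M : NMatrix S V) (ρ : ℕ → V) :
    Fm S → V
  | .var i => ρ i
  | .app c args => (M.interp_nonempty c fun j => M.choiceVal ρ (args j)).some

theorem NMatrix.isVal_choiceVal {S : Signature} {V : Type} (M : NMatrix S V) (ρ : ℕ → V) :
    IsVal M (M.choiceVal ρ) := fun c args =>
  (M.interp_nonempty c fun j => M.choiceVal ρ (args j)).some_mem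

theorem IsVal.comp_subst {S : Signature} {V : Type} {M : NMatrix S V} {w : Fm S → V}
    (hw : IsVal M w) (τ : ℕ → Fm S) : IsVal M fun C => w (C.subst τ) := fun c args =>
  hw c fun j => (args j).subst τ

theorem Deterministic.isVal_eq_of_var {S : Signature} {V : Type} {M : NMatrix S V}
    (hdet : Deterministic M) {v w : Fm S → V} (hv : IsVal M v) (hw : IsVal M w)
    (hvar : ∀ i, v (.var i) = w (.var i)) : ∀ C, v C = w C
  | .var i => hvar i
  | .app c args => by
    obtain ⟨x, hx⟩ := hdet c fun j => v (args j)
    have hargs : (fun j => w (args j)) = fun j => v (args j) :=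
      funext fun j => (hdet.isVal_eq_of_var hv hw hvar (args j)).symm
    have hvx := hv c args
    have hwx := hw c args
    rw [hargs, hx] at hwx
    rw [hx] at hvx
    exact hvx.trans hwx.symm

theorem Deterministic.not_entails_rename {S : Signature} {V : Type} {M : NMatrix S V}
    (hdet : Deterministic M) {Γ : Set (Fm S)} {A : Fm S} {v : Fm S → V} (hv : IsVal M v)
    (hΓ : ∀ B ∈ Γ, v B ∈ M.D) (hA : v A ∉ M.D) (σ : ℕ → ℕ) (ρ : ℕ → V)
    (hρ : ∀ i, ρ (σ i) = v (.var i)) :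
    ¬ Entails M ((fun B => Fm.subst (fun i => Fm.var (σ i)) B) '' Γ)
      (Fm.subst (fun i => Fm.var (σ i)) A) := by
  set w := M.choiceVal ρ
  have hw : IsVal M w := M.isVal_choiceVal ρ
  have hwσ : ∀ C, w (C.subst fun i => .var (σ i)) = v C :=
    hdet.isVal_eq_of_var (hw.comp_subst _) hv hρ
  intro hent
  refine hA ((hwσ A) ▸ hent w hw ?_)
  rintro _ ⟨B, hB, rfl⟩
  exact (hwσ B).symm ▸ hΓ B hB

/-- The logic of a finite-valued deterministic matrix M is n-determined
for any n ≥ |V|: whenever Γ ⊬_M A there is a substitution σ mapping every variable to a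
variable among p_0,…,p_{n-1} such that Γ^σ ⊬_M A^σ. -/
theorem stmt_1 {S : Signature} {V : Type} [Finite V] (M : NMatrix S V)
    (hdet : Deterministic M) (n : ℕ) (hn : Nat.card V ≤ n)
    (Γ : Set (Fm S)) (A : Fm S) (h : ¬ Entails M Γ A) :
    ∃ σ : ℕ → ℕ, (∀ i, σ i < n) ∧
      ¬ Entails M ((fun B => Fm.subst (fun i => Fm.var (σ i)) B) '' Γ)
          (Fm.subst (fun i => Fm.var (σ i)) A) := by
  simp only [Entails, not_forall] at h
  obtain ⟨v, hv, hΓ, hA⟩ := h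
  have : Nonempty V := ⟨v (.var 0)⟩
  let code : V → ℕ := fun x => Finite.equivFin V x
  have hcode : code.Injective := Fin.val_injective.comp (Finite.equivFin V).injective
  refine ⟨fun i => code (v (.var i)), fun i => (Finite.equivFin V _).isLt.trans_le hn, ?_⟩
  exact hdet.not_entails_rename hv hΓ hA _ (Function.invFun code)
    fun i => Function.leftInverse_invFun hcode _
end

section
/- Let Σ be a signature, ⟨Σ, ⊢_1⟩ a compact Tarskian logic, and ⟨Σ, ⊢_2⟩ an n-determined Tarskian logic for some n ∈ ℕ. Suppose Θ ⊆ L_Σ(P_n) is such that for each A ∈ L_Σ(P_n) there exists A* ∈ Θ with A ⊣⊢_1 A* and A ⊣⊢_2 A*. Then ⊢_1 ⊆ ⊢_2 if and only if for all finite Γ ∪ {A} ⊆ Θ, Γ ⊢_1 A implies Γ ⊢_2 A. -/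
def IsTarskian {S : Signature} (r : Set (Fm S) → Fm S → Prop) : Prop :=
  (∀ (Γ : Set (Fm S)) (A : Fm S), A ∈ Γ → r Γ A) ∧
  (∀ (Γ Δ : Set (Fm S)) (A : Fm S), r Γ A → Γ ⊆ Δ → r Δ A) ∧
  (∀ (Γ Δ : Set (Fm S)) (A : Fm S), r Γ A → (∀ B ∈ Γ, r Δ B) → r Δ A) ∧
  (∀ (Γ : Set (Fm S)) (A : Fm S) (σ : ℕ → Fm S), r Γ A →
    r ((fun B => Fm.subst σ B) '' Γ) (Fm.subst σ A))

def Compact {S : Signature} (r : Set (Fm S) → Fm S → Prop) : Prop :=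
  ∀ (Γ : Set (Fm S)) (A : Fm S), r Γ A → ∃ Δ ⊆ Γ, Δ.Finite ∧ r Δ A

def NDetermined {S : Signature} (n : ℕ) (r : Set (Fm S) → Fm S → Prop) : Prop :=
  ∀ (Γ : Set (Fm S)) (A : Fm S), ¬ r Γ A →
    ∃ σ : ℕ → ℕ, (∀ i, σ i < n) ∧
      ¬ r ((fun B => Fm.subst (fun i => Fm.var (σ i)) B) '' Γ)
          (Fm.subst (fun i => Fm.var (σ i)) A)

/-!
Transport a failure `Γ ⊬₂ A` into `L_Σ(P_n)` by the substitution that `n`-determinedness provides;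
the substitution instance is still derivable in `⊢₁`, and by compactness from a finite set of
premises. Replacing those premises and the conclusion by their representatives in `Θ`, which are
interderivable with them in both logics, turns this into an instance of the hypothesis on `Θ`;
moving back along the interderivabilities gives the substitution instance in `⊢₂`, contradicting
the choice of the substitution.
-/

lemma Fm.varsLT_subst_var {S : Signature} {n : ℕ} {σ : ℕ → ℕ} (hσ : ∀ i, σ i < n) :
    ∀ A : Fm S, (A.subst fun i => .var (σ i)).varsLT n
  | .var i => hσ i
  | .app _ args => fun j => Fm.varsLT_subst_var hσ (args j)

lemma Set.Finite.exists_finite_subset_forall_exists {α : Type*} {Δ Θ : Set α} (hΔ : Δ.Finite)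
    {R : α → α → Prop} (h : ∀ B ∈ Δ, ∃ B' ∈ Θ, R B B') :
    ∃ Δ' ⊆ Θ, Δ'.Finite ∧ (∀ B ∈ Δ, ∃ B' ∈ Δ', R B B') ∧ ∀ B' ∈ Δ', ∃ B ∈ Δ, R B B' := by
  choose f hfΘ hf using fun B : Δ => h B B.2
  have := hΔ.to_subtype
  refine ⟨Set.range f, Set.range_subset_iff.2 hfΘ, Set.finite_range f,
    fun B hB => ⟨f ⟨B, hB⟩, Set.mem_range_self _, hf ⟨B, hB⟩⟩, ?_⟩
  rintro _ ⟨B, rfl⟩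
  exact ⟨B, B.2, hf B⟩

namespace IsTarskian

variable {S : Signature} {r : Set (Fm S) → Fm S → Prop}

lemma mono (h : IsTarskian r) {Γ Δ : Set (Fm S)} {A : Fm S} (hA : r Γ A) (hΓΔ : Γ ⊆ Δ) :
    r Δ A :=
  h.2.1 Γ Δ A hA hΓΔ

lemma trans (h : IsTarskian r) {Γ Δ : Set (Fm S)} {A : Fm S} (hA : r Γ A)
    (hΓ : ∀ B ∈ Γ, r Δ B) : r Δ A :=
  h.2.2.1 Γ Δ A hA hΓ

lemma subst (h : IsTarskian r) {Γ : Set (Fm S)} {A : Fm S} (σ : ℕ → Fm S) (hA : r Γ A) :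
    r (Fm.subst σ '' Γ) (A.subst σ) :=
  h.2.2.2 Γ A σ hA

lemma of_mem_of_singleton (h : IsTarskian r) {Δ : Set (Fm S)} {B C : Fm S} (hB : B ∈ Δ)
    (hBC : r {B} C) : r Δ C :=
  h.mono hBC (Set.singleton_subset_iff.2 hB)

lemma cut_singleton (h : IsTarskian r) {Γ : Set (Fm S)} {A B : Fm S} (hA : r Γ A)
    (hAB : r {A} B) : r Γ B :=
  h.trans hAB fun _ hC => (Set.mem_singleton_iff.1 hC) ▸ hA

lemma of_forall_exists_singleton (h : IsTarskian r) {Γ Δ : Set (Fm S)} {A : Fm S} (hA : r Γ A)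
    (hΓ : ∀ B ∈ Γ, ∃ B' ∈ Δ, r {B'} B) : r Δ A :=
  h.trans hA fun B hB =>
    let ⟨_, hB', hB'B⟩ := hΓ B hB
    h.of_mem_of_singleton hB' hB'B

end IsTarskian

section

variable {S : Signature} {r1 r2 : Set (Fm S) → Fm S → Prop} {n : ℕ}

lemma derives_of_derives_of_finite_varsLT_of_representatives
    (h1 : IsTarskian r1) (h2 : IsTarskian r2) {Θ : Set (Fm S)}
    (hrep : ∀ A : Fm S, Fm.varsLT n A →
      ∃ B ∈ Θ, (r1 {A} B ∧ r1 {B} A) ∧ (r2 {A} B ∧ r2 {B} A))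
    (hΘ : ∀ (Γ : Set (Fm S)) (A : Fm S), Γ ⊆ Θ → Γ.Finite → A ∈ Θ → r1 Γ A → r2 Γ A)
    {Δ : Set (Fm S)} {A : Fm S} (hΔ : Δ.Finite) (hΔn : ∀ B ∈ Δ, B.varsLT n) (hAn : A.varsLT n)
    (hΔA : r1 Δ A) : r2 Δ A := by
  obtain ⟨Δ', hΔ'Θ, hΔ'fin, hΔΔ', hΔ'Δ⟩ :=
    hΔ.exists_finite_subset_forall_exists fun B hB => hrep B (hΔn B hB)
  obtain ⟨A', hA'Θ, ⟨hAA'₁, -⟩, ⟨-, hA'A₂⟩⟩ := hrep A hAn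
  have hΔ'A'₁ : r1 Δ' A' := h1.cut_singleton
    (h1.of_forall_exists_singleton hΔA fun B hB =>
      let ⟨B', hB', hBB'⟩ := hΔΔ' B hB
      ⟨B', hB', hBB'.1.2⟩) hAA'₁
  have hΔA'₂ : r2 Δ A' := h2.of_forall_exists_singleton (hΘ Δ' A' hΔ'Θ hΔ'fin hA'Θ hΔ'A'₁)
    fun B' hB' =>
      let ⟨B, hB, hBB'⟩ := hΔ'Δ B' hB'
      ⟨B, hB, hBB'.2.1⟩
  exact h2.cut_singleton hΔA'₂ hA'A₂

lemma derives_of_derives_of_finite_varsLT (h1 : IsTarskian r1) (h2 : IsTarskian r2)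
    (hc : Compact r1) (hd : NDetermined n r2)
    (hfin : ∀ (Δ : Set (Fm S)) (A : Fm S), Δ.Finite → (∀ B ∈ Δ, B.varsLT n) → A.varsLT n →
      r1 Δ A → r2 Δ A)
    {Γ : Set (Fm S)} {A : Fm S} (hΓA : r1 Γ A) : r2 Γ A := by
  by_contra hnot
  obtain ⟨σ, hσ, hσnot⟩ := hd Γ A hnot
  obtain ⟨Δ, hΔΓ, hΔfin, hΔA⟩ := hc _ _ (h1.subst _ hΓA)
  have hΔn : ∀ B ∈ Δ, B.varsLT n := by
    intro B hB
    obtain ⟨C, -, rfl⟩ := hΔΓ hB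
    exact Fm.varsLT_subst_var hσ C
  exact hσnot (h2.mono (hfin Δ _ hΔfin hΔn (Fm.varsLT_subst_var hσ A) hΔA) hΔΓ)

end

theorem stmt_2_general {S : Signature} (r1 r2 : Set (Fm S) → Fm S → Prop)
    (h1 : IsTarskian r1) (h2 : IsTarskian r2)
    (hc : Compact r1) (n : ℕ) (hd : NDetermined n r2)
    (Θ : Set (Fm S))
    (hrep : ∀ A : Fm S, Fm.varsLT n A →
      ∃ B ∈ Θ, (r1 {A} B ∧ r1 {B} A) ∧ (r2 {A} B ∧ r2 {B} A)) :
    (∀ (Γ : Set (Fm S)) (A : Fm S), r1 Γ A → r2 Γ A) ↔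
      (∀ (Γ : Set (Fm S)) (A : Fm S), Γ ⊆ Θ → Γ.Finite → A ∈ Θ → r1 Γ A → r2 Γ A) :=
  ⟨fun h Γ A _ _ _ => h Γ A, fun hΘ _ _ =>
    derives_of_derives_of_finite_varsLT h1 h2 hc hd fun _ _ hΔ hΔn hAn =>
      derives_of_derives_of_finite_varsLT_of_representatives h1 h2 hrep hΘ hΔ hΔn hAn⟩

/-- If ⊢₁ is a compact Tarskian logic and ⊢₂ an n-determined Tarskian logic,
and Θ ⊆ L_Σ(P_n) contains, for each formula A over the variables p_0,…,p_{n-1}, a formula A*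
interderivable with A in both logics, then ⊢₁ ⊆ ⊢₂ iff Γ ⊢₁ A implies Γ ⊢₂ A for all
finite Γ ∪ {A} ⊆ Θ. -/
theorem stmt_2 {S : Signature} (r1 r2 : Set (Fm S) → Fm S → Prop)
    (h1 : IsTarskian r1) (h2 : IsTarskian r2)
    (hc : Compact r1) (n : ℕ) (hd : NDetermined n r2)
    (Θ : Set (Fm S)) (hΘ : ∀ B ∈ Θ, Fm.varsLT n B)
    (hrep : ∀ A : Fm S, Fm.varsLT n A →
      ∃ B ∈ Θ, (r1 {A} B ∧ r1 {B} A) ∧ (r2 {A} B ∧ r2 {B} A)) :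
    (∀ (Γ : Set (Fm S)) (A : Fm S), r1 Γ A → r2 Γ A) ↔
      (∀ (Γ : Set (Fm S)) (A : Fm S), Γ ⊆ Θ → Γ.Finite → A ∈ Θ → r1 Γ A → r2 Γ A) :=
  stmt_2_general r1 r2 h1 h2 hc n hd Θ hrep
end

section
/- Let Σ be a signature, M a Σ-Nmatrix, and M̃ its tilded Nmatrix. For every Γ ∪ {A} ⊆ L_Σ(P): Γ ⊢_{M̃} A if and only if A ∈ Γ or A ∈ Thm(Σ, ⊢_M). -/
/-- The tilde-forgetful function: collapses the fresh designated copy x̃ of each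
undesignated value x back to x. -/
def uForget {S : Signature} {V : Type} (M : NMatrix S V) :
    V ⊕ {x : V // x ∉ M.D} → V :=
  Sum.elim id Subtype.val

/-- The tilded Nmatrix M̃: add a fresh designated copy x̃ of each undesignated value x,
interpreting each connective by ©_{M̃}(x₁,…,x_k) = u⁻¹(©_M(u(x₁),…,u(x_k))). -/
def tilded {S : Signature} {V : Type} (M : NMatrix S V) :
    NMatrix S (V ⊕ {x : V // x ∉ M.D}) where
  D := { y | Sum.elim (fun x => x ∈ M.D) (fun _ => True) y }
  interp := fun c args => uForget M ⁻¹' (M.interp c (fun i => uForget M (args i)))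
  interp_nonempty := by
    intro c args
    obtain ⟨x, hx⟩ := M.interp_nonempty c (fun i => uForget M (args i))
    exact ⟨Sum.inl x, hx⟩

/-- The unconstrained Σ-Nmatrix U_Σ: two values 0 = false, 1 = true, with 1 designated, and
every connective interpreted by the constant multifunction {0, 1}. -/
def unconstrained (S : Signature) : NMatrix S Bool where
  D := {true}
  interp := fun _ _ => Set.univ
  interp_nonempty := fun _ _ => ⟨true, trivial⟩

/-!
A valuation of M̃ is a valuation of M in which every formula with an undesignated value may
independently be sent to that value or to its designated copy. Forgetting tildes therefore keeps
theorems of M designated in M̃; conversely, an M-valuation refuting A lifts to an M̃-valuation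
that designates every formula except A, so A must lie in Γ unless it is a theorem of M.
-/

theorem entails_of_mem {S : Signature} {V : Type} (M : NMatrix S V) {Γ : Set (Fm S)} {A : Fm S}
    (hA : A ∈ Γ) : Entails M Γ A :=
  fun _ _ hΓ => hΓ A hA

namespace tilded

variable {S : Signature} {V : Type} (M : NMatrix S V)

open Classical in
noncomputable def tildeOf (x : V) : V ⊕ {x : V // x ∉ M.D} :=
  if h : x ∈ M.D then .inl x else .inr ⟨x, h⟩

theorem uForget_tildeOf (x : V) : uForget M (tildeOf M x) = x := by
  unfold tildeOf
  split_ifs <;> rfl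

theorem tildeOf_mem_D (x : V) : tildeOf M x ∈ (tilded M).D := by
  unfold tildeOf
  split_ifs with h
  · exact h
  · trivial

theorem mem_D_of_uForget_mem_D {y : V ⊕ {x : V // x ∉ M.D}} (hy : uForget M y ∈ M.D) :
    y ∈ (tilded M).D := by
  cases y
  · exact hy
  · trivial

theorem isVal_iff {v : Fm S → V ⊕ {x : V // x ∉ M.D}} :
    IsVal (tilded M) v ↔ IsVal M (uForget M ∘ v) :=
  Iff.rfl

end tilded

open tilded

theorem entails_tilded_of_entails_empty {S : Signature} {V : Type} (M : NMatrix S V)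
    (Γ : Set (Fm S)) {A : Fm S} (hA : Entails M ∅ A) : Entails (tilded M) Γ A :=
  fun _ hv _ => mem_D_of_uForget_mem_D M <|
    hA _ ((isVal_iff M).mp hv) (fun _ hB => absurd hB (Set.notMem_empty _))

theorem entails_empty_of_entails_tilded {S : Signature} {V : Type} (M : NMatrix S V)
    {Γ : Set (Fm S)} {A : Fm S} (h : Entails (tilded M) Γ A) (hA : A ∉ Γ) : Entails M ∅ A := by
  intro w hw _
  classical
  set v := Function.update (tildeOf M ∘ w) A (.inl (w A))
  have hvw : uForget M ∘ v = w := by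
    funext B
    by_cases hB : B = A
    · subst hB; simp [v, uForget]
    · simp [v, hB, uForget_tildeOf]
  have hvA : v A ∈ (tilded M).D :=
    h v ((isVal_iff M).mpr (hvw ▸ hw)) fun B hB => by
      simpa [v, ne_of_mem_of_not_mem hB hA] using tildeOf_mem_D M (w B)
  rwa [show v A = .inl (w A) by simp [v]] at hvA

/-- In the logic of the tilded Nmatrix M̃, Γ ⊢_{M̃} A holds exactly when A ∈ Γ
or A is a theorem of the logic of M. -/
theorem stmt_11 {S : Signature} {V : Type} (M : NMatrix S V)
    (Γ : Set (Fm S)) (A : Fm S) :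
    Entails (tilded M) Γ A ↔ (A ∈ Γ ∨ Entails M ∅ A) := by
  refine ⟨fun h => or_iff_not_imp_left.mpr (entails_empty_of_entails_tilded M h),
    fun h => h.elim (entails_of_mem _) (entails_tilded_of_entails_empty M Γ)⟩
end

section
/- Let Σ be the signature with a single unary connective ♭ and no other connectives, and let M_6 = ⟨{0,1}, {1}, ·_{M_6}⟩ be the Σ-Nmatrix with ♭_{M_6}(0) = {1} and ♭_{M_6}(1) = {0,1}. Then M_6 is equivalent to the unconstrained Nmatrix U_Σ; in particular, the logic of M_6 is discrete: for all Γ ∪ {A} ⊆ L_Σ(P), Γ ⊢_{M_6} A if and only if A ∈ Γ. -/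
/-- The signature with a single unary connective ♭ and no other connectives. -/
def flatSig : Signature where
  Conn := Unit
  arity := fun _ => 1

/-- The Nmatrix M₆ over {0 = false, 1 = true} with 1 designated, ♭(0) = {1} and
♭(1) = {0,1}. -/
def M6 : NMatrix flatSig Bool where
  D := {true}
  interp := fun _ args => if args ⟨0, Nat.one_pos⟩ = false then {true} else Set.univ
  interp_nonempty := by
    intro c args
    try dsimp only
    split
    · exact ⟨true, rfl⟩
    · exact ⟨true, trivial⟩

theorem Fm.app_ne_arg {S : Signature} (c : S.Conn) (args : Fin (S.arity c) → Fm S)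
    (i : Fin (S.arity c)) : Fm.app c args ≠ args i := by
  suffices key : ∀ A : Fm S, ∀ c args (i : Fin (S.arity c)), args i = A → Fm.app c args ≠ A from
    key _ c args i rfl
  intro A
  induction A with
  | var => intro _ _ _ _ h; cases h
  | app c' args' ih =>
    intro c args i hi h
    cases h
    exact ih i c' args' i rfl hi.symm

theorem Entails.of_mem {S : Signature} {V : Type} (M : NMatrix S V) {Γ : Set (Fm S)}
    {A : Fm S} (h : A ∈ Γ) : Entails M Γ A :=
  fun _ _ hΓ => hΓ A h

open Classical in
noncomputable def isolatingVal {S : Signature} (A : Fm S) (B : Fm S) : Bool := decide (B ≠ A)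

theorem isolatingVal_eq_true_iff {S : Signature} {A B : Fm S} :
    isolatingVal A B = true ↔ B ≠ A := by
  simp [isolatingVal]

theorem isolatingVal_eq_false_iff {S : Signature} {A B : Fm S} :
    isolatingVal A B = false ↔ B = A := by
  simp [isolatingVal]

theorem entails_iff_mem_of_isVal_isolatingVal {S : Signature} {M : NMatrix S Bool}
    (hD : M.D = {true}) (hval : ∀ A : Fm S, IsVal M (isolatingVal A))
    (Γ : Set (Fm S)) (A : Fm S) : Entails M Γ A ↔ A ∈ Γ := by
  refine ⟨fun h => ?_, Entails.of_mem M⟩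
  by_contra hA
  have hΓ : ∀ B ∈ Γ, isolatingVal A B ∈ M.D := by
    intro B hB
    rw [hD, Set.mem_singleton_iff, isolatingVal_eq_true_iff]
    rintro rfl
    exact hA hB
  simpa [hD, isolatingVal_eq_true_iff] using h _ (hval A) hΓ

theorem isVal_unconstrained {S : Signature} (v : Fm S → Bool) : IsVal (unconstrained S) v :=
  fun _ _ => Set.mem_univ _

theorem isVal_M6_isolatingVal (A : Fm flatSig) : IsVal M6 (isolatingVal A) := by
  intro c args
  simp only [M6]
  split_ifs with harg
  · have hA : args ⟨0, Nat.one_pos⟩ = A := isolatingVal_eq_false_iff.mp harg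
    rw [Set.mem_singleton_iff, isolatingVal_eq_true_iff, ← hA]
    exact Fm.app_ne_arg c args _
  · exact Set.mem_univ _

/-- M₆ is equivalent to the unconstrained Nmatrix U_Σ; in particular its logic
is discrete: Γ ⊢_{M₆} A iff A ∈ Γ. -/
theorem stmt_15 :
    (∀ (Γ : Set (Fm flatSig)) (A : Fm flatSig),
        Entails M6 Γ A ↔ Entails (unconstrained flatSig) Γ A) ∧
    (∀ (Γ : Set (Fm flatSig)) (A : Fm flatSig), Entails M6 Γ A ↔ A ∈ Γ) := by
  have hM6 := entails_iff_mem_of_isVal_isolatingVal rfl isVal_M6_isolatingVal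
  have hU := entails_iff_mem_of_isVal_isolatingVal (M := unconstrained flatSig) rfl
    fun _ => isVal_unconstrained _
  exact ⟨fun Γ A => (hM6 Γ A).trans (hU Γ A).symm, hM6⟩
end

section
/- Let M_1 = ⟨V_1, D_1, ·_{M_1}⟩ and M_2 = ⟨V_2, D_2, ·_{M_2}⟩ be Σ-Nmatrices. If there exists a surjective strict homomorphism h : M_1 → M_2 that is strongly-preserving, then ⊢_{M_1} = ⊢_{M_2}. -/
/-- A strict homomorphism of Σ-Nmatrices: a function between the value sets such that the
designated values of M₁ are exactly the preimages of the designated values of M₂, and the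
image of each interpretation set is contained in the corresponding interpretation set. -/
def StrictHom {S : Signature} {V1 V2 : Type} (M1 : NMatrix S V1) (M2 : NMatrix S V2)
    (h : V1 → V2) : Prop :=
  M1.D = h ⁻¹' M2.D ∧
  ∀ (c : S.Conn) (args : Fin (S.arity c) → V1),
    h '' M1.interp c args ⊆ M2.interp c (fun i => h (args i))

/-- A surjective strict homomorphism is strongly-preserving when the image of each
interpretation set is exactly the corresponding interpretation set. -/
def StronglyPreserving {S : Signature} {V1 V2 : Type} (M1 : NMatrix S V1)
    (M2 : NMatrix S V2) (h : V1 → V2) : Prop :=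
  ∀ (c : S.Conn) (args : Fin (S.arity c) → V1),
    h '' M1.interp c args = M2.interp c (fun i => h (args i))

namespace NMatrix

variable {S : Signature} {V1 V2 : Type} {M1 : NMatrix S V1} {M2 : NMatrix S V2} {h : V1 → V2}

theorem isVal_comp_of_strictHom (hh : StrictHom M1 M2 h) {v : Fm S → V1} (hv : IsVal M1 v) :
    IsVal M2 (h ∘ v) :=
  fun c args => hh.2 c (fun j => v (args j)) ⟨_, hv c args, rfl⟩

theorem entails_of_strictHom (hh : StrictHom M1 M2 h) {Γ : Set (Fm S)} {A : Fm S}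
    (hA : Entails M2 Γ A) : Entails M1 Γ A := by
  intro v hv hΓ
  rw [hh.1] at hΓ ⊢
  exact hA (h ∘ v) (isVal_comp_of_strictHom hh hv) hΓ

noncomputable def liftVal (hsurj : Function.Surjective h) (hsp : StronglyPreserving M1 M2 h)
    {v2 : Fm S → V2} (hv2 : IsVal M2 v2) : (A : Fm S) → {x : V1 // h x = v2 A}
  | .var i => ⟨Function.surjInv hsurj (v2 (.var i)), Function.surjInv_eq hsurj _⟩
  | .app c args =>
    have mem :
        v2 (.app c args) ∈ h '' M1.interp c (fun j => (liftVal hsurj hsp hv2 (args j)).1) := by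
      have hargs : (fun j => h (liftVal hsurj hsp hv2 (args j)).1) = fun j => v2 (args j) :=
        funext fun j => (liftVal hsurj hsp hv2 (args j)).2
      rw [hsp, hargs]
      exact hv2 c args
    ⟨mem.choose, mem.choose_spec.2⟩

theorem isVal_liftVal (hsurj : Function.Surjective h) (hsp : StronglyPreserving M1 M2 h)
    {v2 : Fm S → V2} (hv2 : IsVal M2 v2) : IsVal M1 (fun A => (liftVal hsurj hsp hv2 A).1) := by
  intro c args
  show (liftVal hsurj hsp hv2 (.app c args)).1 ∈ _
  rw [liftVal]
  exact (Exists.choose_spec (p := fun x => x ∈ M1.interp c _ ∧ h x = _) _).1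

theorem exists_isVal_comp_eq (hsurj : Function.Surjective h) (hsp : StronglyPreserving M1 M2 h)
    {v2 : Fm S → V2} (hv2 : IsVal M2 v2) : ∃ v1, IsVal M1 v1 ∧ h ∘ v1 = v2 :=
  ⟨_, isVal_liftVal hsurj hsp hv2, funext fun A => (liftVal hsurj hsp hv2 A).2⟩

theorem entails_of_stronglyPreserving (hh : StrictHom M1 M2 h) (hsurj : Function.Surjective h)
    (hsp : StronglyPreserving M1 M2 h) {Γ : Set (Fm S)} {A : Fm S} (hA : Entails M1 Γ A) :
    Entails M2 Γ A := by
  intro v2 hv2 hΓ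
  obtain ⟨v1, hv1, rfl⟩ := exists_isVal_comp_eq hsurj hsp hv2
  have hΓ1 : ∀ B ∈ Γ, v1 B ∈ M1.D := by rw [hh.1]; exact hΓ
  have hA1 := hA v1 hv1 hΓ1
  rw [hh.1] at hA1
  exact hA1

end NMatrix

/-- If there is a surjective strongly-preserving strict homomorphism
h : M₁ → M₂ then ⊢_{M₁} = ⊢_{M₂}. -/
theorem stmt_18 {S : Signature} {V1 V2 : Type} (M1 : NMatrix S V1) (M2 : NMatrix S V2)
    (h : V1 → V2) (hh : StrictHom M1 M2 h) (hsurj : Function.Surjective h)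
    (hsp : StronglyPreserving M1 M2 h) :
    ∀ (Γ : Set (Fm S)) (A : Fm S), Entails M1 Γ A ↔ Entails M2 Γ A :=
  fun _ _ =>
    ⟨NMatrix.entails_of_stronglyPreserving hh hsurj hsp, NMatrix.entails_of_strictHom hh⟩
end

section
/- Let M_1 and M_2 be Σ-Nmatrices. Then ⊢_{M_1} ⊆ ⊢_{M_2} if and only if BVal(M_2) ⊆ BVal(M_1)^⊓, where BVal(M)^⊓ is the meet-closure of the set BVal(M) of bivaluations induced by M. Consequently, ⊢_{M_1} = ⊢_{M_2} if and only if BVal(M_1)^⊓ = BVal(M_2)^⊓. -/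
/-- The set of bivaluations induced by an Nmatrix M: characteristic functions (into Prop)
of the sets of formulas designated under some valuation of M. -/
def BVal {S : Signature} {V : Type} (M : NMatrix S V) : Set (Fm S → Prop) :=
  { b | ∃ v : Fm S → V, IsVal M v ∧ ∀ A, b A ↔ v A ∈ M.D }

/-- The meet-closure of a set of bivaluations: all pointwise meets of its subsets. -/
def meetClosure {S : Signature} (B : Set (Fm S → Prop)) : Set (Fm S → Prop) :=
  { b | ∃ B' ⊆ B, ∀ A, b A ↔ ∀ b' ∈ B', b' A }

def BEntails {α : Type*} (B : Set (α → Prop)) (Γ : Set α) (A : α) : Prop :=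
  ∀ b ∈ B, (∀ C ∈ Γ, b C) → b A

theorem BEntails.mono {α : Type*} {B : Set (α → Prop)} {Γ Δ : Set α} {A : α}
    (h : BEntails B Γ A) (hΓΔ : Γ ⊆ Δ) : BEntails B Δ A :=
  fun b hb hΔ => h b hb fun C hC => hΔ C (hΓΔ hC)

theorem entails_iff_bEntails_bVal {S : Signature} {V : Type} (M : NMatrix S V)
    (Γ : Set (Fm S)) (A : Fm S) : Entails M Γ A ↔ BEntails (BVal M) Γ A := by
  constructor
  · rintro hE b ⟨v, hv, hb⟩ hΓ
    exact (hb A).2 (hE v hv fun C hC => (hb C).1 (hΓ C hC))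
  · exact fun hB v hv hΓ => hB (fun C => v C ∈ M.D) ⟨v, hv, fun _ => Iff.rfl⟩ hΓ

section meetClosure

variable {S : Signature}

theorem mem_meetClosure_iff {X : Set (Fm S → Prop)} {b : Fm S → Prop} :
    b ∈ meetClosure X ↔ ∀ A, BEntails X {C | b C} A → b A := by
  constructor
  · rintro ⟨B', hB'X, hb⟩ A hA
    exact (hb A).2 fun b' hb' => hA b' (hB'X hb') fun C hC => (hb C).1 hC b' hb'
  · intro hclosed
    refine ⟨{b' ∈ X | ∀ C, b C → b' C}, fun b' hb' => hb'.1, fun A => ⟨?_, ?_⟩⟩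
    · exact fun hA b' hb' => hb'.2 A hA
    · exact fun hA => hclosed A fun b' hb'X hb' => hA b' ⟨hb'X, hb'⟩

theorem subset_meetClosure_iff {X Y : Set (Fm S → Prop)} :
    Y ⊆ meetClosure X ↔ ∀ Γ A, BEntails X Γ A → BEntails Y Γ A := by
  constructor
  · intro hYX Γ A hA b hbY hΓ
    exact mem_meetClosure_iff.1 (hYX hbY) A (hA.mono hΓ)
  · exact fun h b hbY => mem_meetClosure_iff.2 fun A hA => h _ A hA b hbY fun _ => id

theorem bEntails_meetClosure_iff {X : Set (Fm S → Prop)} {Γ : Set (Fm S)} {A : Fm S} :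
    BEntails (meetClosure X) Γ A ↔ BEntails X Γ A := by
  refine ⟨fun h b hb => h b ⟨{b}, by simpa using hb, by simp⟩, fun h b hb hΓ => ?_⟩
  exact mem_meetClosure_iff.1 hb A (h.mono hΓ)

theorem meetClosure_eq_meetClosure_iff {X Y : Set (Fm S → Prop)} :
    meetClosure X = meetClosure Y ↔ ∀ Γ A, BEntails X Γ A ↔ BEntails Y Γ A := by
  simp only [Set.Subset.antisymm_iff, subset_meetClosure_iff, bEntails_meetClosure_iff,
    ← forall_and, iff_def, and_comm]

end meetClosure

/-- ⊢_{M₁} ⊆ ⊢_{M₂} iff BVal(M₂) ⊆ BVal(M₁)^⊓; consequently,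
⊢_{M₁} = ⊢_{M₂} iff BVal(M₁)^⊓ = BVal(M₂)^⊓. -/
theorem stmt_19 {S : Signature} {V1 V2 : Type} (M1 : NMatrix S V1) (M2 : NMatrix S V2) :
    ((∀ (Γ : Set (Fm S)) (A : Fm S), Entails M1 Γ A → Entails M2 Γ A) ↔
      BVal M2 ⊆ meetClosure (BVal M1)) ∧
    ((∀ (Γ : Set (Fm S)) (A : Fm S), Entails M1 Γ A ↔ Entails M2 Γ A) ↔
      meetClosure (BVal M1) = meetClosure (BVal M2)) := by
  simp only [entails_iff_bEntails_bVal, subset_meetClosure_iff, meetClosure_eq_meetClosure_iff,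
    and_self]
end
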